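/- arXiv:1701.01182 — 7 statements merged into one kernel-verified Lean document; each statement's English description precedes it below -/
import Mathlib

section
/- Let λ be a partition with n parts and β an upper n-tuple (β_i ≥ i for all i). Then the row-bound tableau set S_λ(β) has a unique maximal element with respect to entrywise comparison of tableau values; i.e., there is a tableau M ∈ S_λ(β) such that every T ∈ S_λ(β) satisfies T(b) ≤ M(b) for every box b of λ. -/
open Finset

/-- End of the carrel containing `i`: the least `q ≥ i` with `q ∈ R` or `q = n`. -/
noncomputable def carrelEnd (R : Finset ℕ) (n i : ℕ) : ℕ := sInf {q | i ≤ q ∧ (q ∈ R ∨ q = n)}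

/-- `x` is a critical index of the upper `R`-tuple `β`:
`β x - x < β j - j` for every `j` with `x < j ≤ carrelEnd R n x`. -/
def IsCritical (R : Finset ℕ) (n : ℕ) (β : ℕ → ℕ) (x : ℕ) : Prop :=
  1 ≤ x ∧ x ≤ n ∧ ∀ j, x < j → j ≤ carrelEnd R n x → β x + j < β j + x

/-- The least critical index `≥ i`: the right end of the block of `i`. -/
noncomputable def blockEnd (R : Finset ℕ) (n : ℕ) (β : ℕ → ℕ) (i : ℕ) : ℕ :=
  sInf {x | i ≤ x ∧ IsCritical R n β x}

/-- The `R`-core map `Δ_R`. -/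
noncomputable def coreT (R : Finset ℕ) (n : ℕ) (β : ℕ → ℕ) (i : ℕ) : ℕ :=
  if 1 ≤ i ∧ i ≤ n then β (blockEnd R n β i) - (blockEnd R n β i - i) else 0

/-- The `R`-platform map `Ξ_R`. -/
noncomputable def platformT (R : Finset ℕ) (n : ℕ) (β : ℕ → ℕ) (i : ℕ) : ℕ :=
  if 1 ≤ i ∧ i ≤ n then β (blockEnd R n β i) else 0

/-- An upper tuple: entries in `[n]` with `β i ≥ i` on `[1, n]`. -/
def UpperTuple (n : ℕ) (β : ℕ → ℕ) : Prop := ∀ i, 1 ≤ i → i ≤ n → i ≤ β i ∧ β i ≤ n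

/-- `R ⊆ [n-1]`. -/
def ValidR (n : ℕ) (R : Finset ℕ) : Prop := ∀ q ∈ R, 1 ≤ q ∧ q < n

/-- An `R`-increasing tuple: strictly increasing within each carrel. -/
def RIncreasing (n : ℕ) (R : Finset ℕ) (β : ℕ → ℕ) : Prop :=
  ∀ i, 1 ≤ i → i < n → i ∉ R → β i < β (i + 1)

/-- The critical list of `β` is a flag critical list: the rightmost critical entry `β q`
of each non-final carrel is at most the leftmost critical entry of the next carrel. -/
def FlagCriticalList (R : Finset ℕ) (n : ℕ) (β : ℕ → ℕ) : Prop :=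
  ∀ q ∈ R, β q ≤ β (blockEnd R n β (q + 1))

/-- Normalization: entries outside `[1, n]` vanish. -/
def NormalizedT (n : ℕ) (β : ℕ → ℕ) : Prop := ∀ i, i = 0 ∨ n < i → β i = 0

/-- An `R`-ceiling flag: an upper flag that is a concatenation of plateaus whose
rightmost pairs are exactly its `R`-critical pairs. -/
def IsCeilingFlag (R : Finset ℕ) (n : ℕ) (ξ : ℕ → ℕ) : Prop :=
  UpperTuple n ξ ∧ (∀ i, 1 ≤ i → i < n → ξ i ≤ ξ (i + 1)) ∧
  (∀ i, 1 ≤ i → i ≤ n → (IsCritical R n ξ i ↔ (i = n ∨ i ∈ R ∨ ξ i ≠ ξ (i + 1))))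

/-- `lam` (on indices `1, ..., n`) is a partition. -/
def IsPartition (n : ℕ) (lam : ℕ → ℕ) : Prop := ∀ i, 1 ≤ i → i < n → lam (i + 1) ≤ lam i

/-- `R_λ`: the set of column lengths of the shape `λ` that are less than `n`. -/
def Rlam (n : ℕ) (lam : ℕ → ℕ) : Finset ℕ :=
  ((Finset.Icc 1 (lam 1)).image fun j => ((Finset.Icc 1 n).filter fun i => j ≤ lam i).card).filter
    (· < n)

/-- A semistandard tableau of shape `lam` with values in `[n]`:
`T i j` is the value in row `i`, column `j`. -/
def IsSSYT (n : ℕ) (lam : ℕ → ℕ) (T : ℕ → ℕ → ℕ) : Prop :=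
  (∀ i j, 1 ≤ i → i ≤ n → 1 ≤ j → j ≤ lam i → 1 ≤ T i j ∧ T i j ≤ n) ∧
  (∀ i j, 1 ≤ i → i ≤ n → 1 ≤ j → j + 1 ≤ lam i → T i j ≤ T i (j + 1)) ∧
  (∀ i j, 1 ≤ i → i + 1 ≤ n → 1 ≤ j → j ≤ lam (i + 1) → T i j < T (i + 1) j)

/-- Every entry in row `i` is at most `β i`. -/
def RowBound (n : ℕ) (lam β : ℕ → ℕ) (T : ℕ → ℕ → ℕ) : Prop :=
  ∀ i j, 1 ≤ i → i ≤ n → 1 ≤ j → j ≤ lam i → T i j ≤ β i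

/-- Normalization: values outside the shape vanish. -/
def NormalizedTab (n : ℕ) (lam : ℕ → ℕ) (T : ℕ → ℕ → ℕ) : Prop :=
  ∀ i j, ¬(1 ≤ i ∧ i ≤ n ∧ 1 ≤ j ∧ j ≤ lam i) → T i j = 0

/-- Extended depth function of a lattice path with source depth `b`, sink depth `d`,
and `u` easterly steps of depths `t 1, ..., t u`. -/
def extDepth (b d u : ℕ) (t : ℕ → ℕ) (j : ℕ) : ℕ :=
  if j = 0 then b else if j ≤ u then t j else d

/-- `t` encodes a monotone lattice path from `(a, b)` to `(a + u, d)`: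
the extended depths weakly increase. -/
def ValidPath (b d u : ℕ) (t : ℕ → ℕ) : Prop :=
  ∀ j, j ≤ u → extDepth b d u t j ≤ extDepth b d u t (j + 1)

/-- The lattice point `p` lies on the path from `(a, b)` to `(a + u, d)` encoded by `t`. -/
def OnPath (a b d u : ℕ) (t : ℕ → ℕ) (p : ℕ × ℕ) : Prop :=
  ∃ j, j ≤ u ∧ p.1 = a + j ∧ extDepth b d u t j ≤ p.2 ∧ p.2 ≤ extDepth b d u t (j + 1)

/-- The terminal pair `(λ, β)` is nonpermutable: for every nontrivial permutation `π`
of `[n]`, there is no pairwise disjoint `n`-tuple of lattice paths in which the `m`-th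
path goes from source `(n - m, m)` to sink `(λ (π m) + n - π m, β (π m))`. -/
def Nonpermutable (n : ℕ) (lam β : ℕ → ℕ) : Prop :=
  ∀ π : ℕ → ℕ, Set.BijOn π (Set.Icc 1 n) (Set.Icc 1 n) →
    (∃ m, 1 ≤ m ∧ m ≤ n ∧ π m ≠ m) →
    ¬∃ (u : ℕ → ℕ) (L : ℕ → ℕ → ℕ),
      (∀ m, 1 ≤ m → m ≤ n → n - m + u m = lam (π m) + (n - π m) ∧
        ValidPath m (β (π m)) (u m) (L m)) ∧
      (∀ m m', 1 ≤ m → m ≤ n → 1 ≤ m' → m' ≤ n → m ≠ m' →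
        ¬∃ p : ℕ × ℕ, OnPath (n - m) m (β (π m)) (u m) (L m) p ∧
          OnPath (n - m') m' (β (π m')) (u m') (L m') p)

open Classical in
/-- The complete homogeneous symmetric polynomial `h_u(i, k; x)` of degree `u`
in the variables `X i, ..., X k`. -/
noncomputable def hpoly (u i k : ℕ) : MvPolynomial ℕ ℤ :=
  ∑ t ∈ Finset.univ.filter
      (fun t : Fin u → Fin (k + 1) => (∀ a, i ≤ (t a : ℕ)) ∧ Monotone fun a => (t a : ℕ)),
    ∏ a, MvPolynomial.X ((t a : ℕ))

/-- `h_d(i, k; x)` for an integer degree `d`, vanishing when `d < 0`. -/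
noncomputable def hz (d : ℤ) (i k : ℕ) : MvPolynomial ℕ ℤ :=
  if 0 ≤ d then hpoly d.toNat i k else 0

/-- The content weight monomial `x^{Θ(T)}` of a tableau of shape `lam`. -/
noncomputable def tabWeight (n : ℕ) (lam : ℕ → ℕ) (T : ℕ → ℕ → ℕ) : MvPolynomial ℕ ℤ :=
  ∏ i ∈ Finset.Icc 1 n, ∏ j ∈ Finset.Icc 1 (lam i), MvPolynomial.X (T i j)

/-- The row bound sum `s_λ(β; x)`: sum of `x^{Θ(T)}` over `T ∈ S_λ(β)`. -/
noncomputable def rowBoundSum (n : ℕ) (lam β : ℕ → ℕ) : MvPolynomial ℕ ℤ :=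
  ∑ᶠ T ∈ {T : ℕ → ℕ → ℕ |
      IsSSYT n lam T ∧ RowBound n lam β T ∧ NormalizedTab n lam T}, tabWeight n lam T

/-- The Gessel–Viennot matrix, with `(i, j)` entry `h_{λ_j - j + i}(i, β_j; x)`
(here `i, j` are `0`-based, so the `1`-based indices are `i+1, j+1`). -/
noncomputable def gvMatrix (n : ℕ) (lam β : ℕ → ℕ) :
    Matrix (Fin n) (Fin n) (MvPolynomial ℕ ℤ) :=
  Matrix.of fun i j =>
    hz ((lam (j.1 + 1) : ℤ) - (j.1 + 1) + (i.1 + 1)) (i.1 + 1) (β (j.1 + 1))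

/-- The number of monomials of `h_d(i, k; x)`:
`0` for negative degree, `1` for degree zero, else `C(k - i + d, d)` (0 if `k < i`). -/
def monCount (d : ℤ) (i k : ℕ) : ℕ :=
  if d < 0 then 0 else if d = 0 then 1
  else if k < i then 0 else (k - i + d.toNat).choose d.toNat
/-- For an upper `β`, the row bound set `S_λ(β)` has a unique maximal element:
a tableau `M ∈ S_λ(β)` dominating every `T ∈ S_λ(β)` entrywise on the boxes of `λ`. -/
theorem stmt2 (n : ℕ) (hn : 1 ≤ n) (lam β : ℕ → ℕ) (hlam : IsPartition n lam)
    (hβ : ∀ i, 1 ≤ i → i ≤ n → i ≤ β i) :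
    ∃ M, (IsSSYT n lam M ∧ RowBound n lam β M) ∧
      ∀ T, IsSSYT n lam T ∧ RowBound n lam β T →
        ∀ i j, 1 ≤ i → i ≤ n → 1 ≤ j → j ≤ lam i → T i j ≤ M i j := by
  set S : ℕ → ℕ → Set ℕ :=
    fun i j => {v | ∃ k, i ≤ k ∧ k ≤ n ∧ j ≤ lam k ∧ v = min (β k) n - (k - i)} with hS
  have hanti : ∀ a b, 1 ≤ a → a ≤ b → b ≤ n → lam b ≤ lam a := by
    intro a b ha hab hbn
    induction b, hab using Nat.le_induction with
    | base => exact le_refl _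
    | succ b hb ih => exact le_trans (hlam b (by omega) (by omega)) (ih (by omega))
  have hne : ∀ i j, 1 ≤ i → i ≤ n → j ≤ lam i → (S i j).Nonempty := by
    intro i j hi hin hj
    exact ⟨min (β i) n - (i - i), i, le_refl _, hin, hj, rfl⟩
  set M : ℕ → ℕ → ℕ := fun i j => sInf (S i j) with hM
  have hmem : ∀ i j, 1 ≤ i → i ≤ n → j ≤ lam i →
      ∃ k, i ≤ k ∧ k ≤ n ∧ j ≤ lam k ∧ M i j = min (β k) n - (k - i) :=
    fun i j hi hin hj => Nat.sInf_mem (hne i j hi hin hj)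
  have hle : ∀ i j k, i ≤ k → k ≤ n → j ≤ lam k → M i j ≤ min (β k) n - (k - i) :=
    fun i j k h1 h2 h3 => Nat.sInf_le ⟨k, h1, h2, h3, rfl⟩
  refine ⟨M, ⟨⟨?_, ?_, ?_⟩, ?_⟩, ?_⟩
  · -- values in [1, n]
    intro i j hi hin hj hjl
    obtain ⟨k, hik, hkn, hjk, hMe⟩ := hmem i j hi hin hjl
    have hbk := hβ k (by omega) hkn
    have := hle i j i (le_refl _) hin hjl
    have hbi := hβ i hi hin
    constructor <;> omega
  · -- rows weakly increasing
    intro i j hi hin hj hjl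
    obtain ⟨k, hik, hkn, hjk, hMe⟩ := hmem i (j + 1) hi hin hjl
    have := hle i j k hik hkn (by omega)
    omega
  · -- columns strictly increasing
    intro i j hi hin hj hjl
    obtain ⟨k, hik, hkn, hjk, hMe⟩ := hmem (i + 1) j (by omega) hin hjl
    have := hle i j k (by omega) hkn hjk
    have hbk := hβ k (by omega) hkn
    omega
  · -- row bound
    intro i j hi hin hj hjl
    have := hle i j i (le_refl _) hin hjl
    omega
  · -- maximality
    intro T ⟨hT, hTb⟩ i j hi hin hj hjl
    obtain ⟨k, hik, hkn, hjk, hMe⟩ := hmem i j hi hin hjl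
    have chain : ∀ k', i ≤ k' → k' ≤ n → j ≤ lam k' → T i j + (k' - i) ≤ T k' j := by
      intro k' hik' hk'n hjk'
      induction k', hik' using Nat.le_induction with
      | base => omega
      | succ k' hk' ih =>
        have h1 := hT.2.2 k' j (by omega) (by omega) hj hjk'
        have h2 := ih (by omega) (le_trans hjk' (hlam k' (by omega) (by omega)))
        omega
    have h1 := chain k hik hkn hjk
    have h2 := hTb k j (by omega) hkn hj hjk
    have h3 := (hT.1 k j (by omega) hkn hj hjk).2
    omega
end

section
/- For any upper R-tuple β, the R-core δ := Δ_R(β) and the R-platform ξ := Ξ_R(β) have the same set of critical pairs as β in every carrel; in particular Δ_R(Δ_R(β)) = Δ_R(β) and Ξ_R(Δ_R(β)) = Ξ_R(β). -/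
open Finset

section Stmt6Aux

variable (R : Finset ℕ) (n : ℕ)

lemma ceSetNonempty6 (i : ℕ) (hi : i ≤ n) : {q | i ≤ q ∧ (q ∈ R ∨ q = n)}.Nonempty :=
  ⟨n, hi, Or.inr rfl⟩

lemma ceMem6 (i : ℕ) (hi : i ≤ n) :
    i ≤ carrelEnd R n i ∧ (carrelEnd R n i ∈ R ∨ carrelEnd R n i = n) :=
  Nat.sInf_mem (ceSetNonempty6 R n i hi)

lemma ceLe6 (i : ℕ) (hi : i ≤ n) : carrelEnd R n i ≤ n :=
  Nat.sInf_le ⟨hi, Or.inr rfl⟩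

lemma ceSelf6 (q : ℕ) (hq : q ∈ R ∨ q = n) : carrelEnd R n q = q :=
  le_antisymm (Nat.sInf_le ⟨le_refl q, hq⟩)
    (Nat.sInf_mem (⟨q, le_refl q, hq⟩ : {p | q ≤ p ∧ (p ∈ R ∨ p = n)}.Nonempty)).1

lemma ceBetween6 {i j : ℕ} (hi : i ≤ n) (hij : i ≤ j) (hj : j ≤ carrelEnd R n i) :
    carrelEnd R n j = carrelEnd R n i := by
  have h1 : carrelEnd R n j ≤ carrelEnd R n i := Nat.sInf_le ⟨hj, (ceMem6 R n i hi).2⟩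
  have h2 := Nat.sInf_mem (ceSetNonempty6 R n j (le_trans hj (ceLe6 R n i hi)))
  exact le_antisymm h1 (Nat.sInf_le ⟨le_trans hij h2.1, h2.2⟩)

lemma critCe6 (β : ℕ → ℕ) (i : ℕ) (hi1 : 1 ≤ i) (hi : i ≤ n) :
    IsCritical R n β (carrelEnd R n i) := by
  refine ⟨le_trans hi1 (ceMem6 R n i hi).1, ceLe6 R n i hi, ?_⟩
  intro j hj1 hj2
  rw [ceSelf6 R n _ (ceMem6 R n i hi).2] at hj2
  omega

lemma beSpec6 (β : ℕ → ℕ) (i : ℕ) (hi1 : 1 ≤ i) (hi : i ≤ n) :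
    i ≤ blockEnd R n β i ∧ IsCritical R n β (blockEnd R n β i) ∧
      blockEnd R n β i ≤ carrelEnd R n i := by
  have hne : {x | i ≤ x ∧ IsCritical R n β x}.Nonempty :=
    ⟨carrelEnd R n i, (ceMem6 R n i hi).1, critCe6 R n β i hi1 hi⟩
  have hmem := Nat.sInf_mem hne
  exact ⟨hmem.1, hmem.2, Nat.sInf_le ⟨(ceMem6 R n i hi).1, critCe6 R n β i hi1 hi⟩⟩

lemma beOfCrit6 {β : ℕ → ℕ} {x : ℕ} (h : IsCritical R n β x) : blockEnd R n β x = x :=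
  le_antisymm (Nat.sInf_le ⟨le_refl x, h⟩)
    (Nat.sInf_mem (⟨x, le_refl x, h⟩ : {y | x ≤ y ∧ IsCritical R n β y}.Nonempty)).1

lemma coreDef6 (β : ℕ → ℕ) (i : ℕ) (h : 1 ≤ i ∧ i ≤ n) :
    coreT R n β i = β (blockEnd R n β i) - (blockEnd R n β i - i) := by
  unfold coreT; rw [if_pos h]

lemma platDef6 (β : ℕ → ℕ) (i : ℕ) (h : 1 ≤ i ∧ i ≤ n) :
    platformT R n β i = β (blockEnd R n β i) := by
  unfold platformT; rw [if_pos h]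

lemma coreKey6 (β : ℕ → ℕ) (hβ : UpperTuple n β) (i : ℕ) (hi1 : 1 ≤ i) (hi : i ≤ n) :
    coreT R n β i + blockEnd R n β i = β (blockEnd R n β i) + i := by
  obtain ⟨h1, h2, _⟩ := beSpec6 R n β i hi1 hi
  have hb := (hβ _ h2.1 h2.2.1).1
  rw [coreDef6 R n β i ⟨hi1, hi⟩]
  omega

lemma critCoreIff6 (β : ℕ → ℕ) (hβ : UpperTuple n β) (x : ℕ) (hx1 : 1 ≤ x) (hxn : x ≤ n) :
    IsCritical R n β x ↔ IsCritical R n (coreT R n β) x := by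
  constructor
  · intro h
    refine ⟨hx1, hxn, ?_⟩
    intro j hj1 hj2
    have hjn : j ≤ n := le_trans hj2 (ceLe6 R n x hxn)
    have hj0 : 1 ≤ j := by omega
    obtain ⟨hb1, hb2, hb3⟩ := beSpec6 R n β j hj0 hjn
    rw [ceBetween6 R n hxn (le_of_lt hj1) hj2] at hb3
    have hlt : x < blockEnd R n β j := lt_of_lt_of_le hj1 hb1
    have hcrit := h.2.2 _ hlt hb3
    have hkj := coreKey6 R n β hβ j hj0 hjn
    have hkx := coreKey6 R n β hβ x hx1 hxn
    rw [beOfCrit6 R n h] at hkx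
    omega
  · intro h
    obtain ⟨hb1, hb2, hb3⟩ := beSpec6 R n β x hx1 hxn
    rcases eq_or_lt_of_le hb1 with heq | hlt
    · rw [heq]; exact hb2
    · exfalso
      have h1 := h.2.2 _ hlt hb3
      have hkx := coreKey6 R n β hβ x hx1 hxn
      have hkx' := coreKey6 R n β hβ _ hb2.1 hb2.2.1
      rw [beOfCrit6 R n hb2] at hkx'
      omega

lemma critPlatIff6 (β : ℕ → ℕ) (hβ : UpperTuple n β) (x : ℕ) (hx1 : 1 ≤ x) (hxn : x ≤ n) :
    IsCritical R n β x ↔ IsCritical R n (platformT R n β) x := by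
  constructor
  · intro h
    refine ⟨hx1, hxn, ?_⟩
    intro j hj1 hj2
    have hjn : j ≤ n := le_trans hj2 (ceLe6 R n x hxn)
    have hj0 : 1 ≤ j := by omega
    obtain ⟨hb1, hb2, hb3⟩ := beSpec6 R n β j hj0 hjn
    rw [ceBetween6 R n hxn (le_of_lt hj1) hj2] at hb3
    have hlt : x < blockEnd R n β j := lt_of_lt_of_le hj1 hb1
    have hcrit := h.2.2 _ hlt hb3
    have hkj := platDef6 R n β j ⟨hj0, hjn⟩
    have hkx := platDef6 R n β x ⟨hx1, hxn⟩
    rw [beOfCrit6 R n h] at hkx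
    omega
  · intro h
    obtain ⟨hb1, hb2, hb3⟩ := beSpec6 R n β x hx1 hxn
    rcases eq_or_lt_of_le hb1 with heq | hlt
    · rw [heq]; exact hb2
    · exfalso
      have h1 := h.2.2 _ hlt hb3
      have hkx := platDef6 R n β x ⟨hx1, hxn⟩
      have hkx' := platDef6 R n β _ ⟨hb2.1, hb2.2.1⟩
      rw [beOfCrit6 R n hb2] at hkx'
      omega

end Stmt6Aux

/-- `Δ_R(β)` and `Ξ_R(β)` have the same critical pairs as `β`;
in particular `Δ_R(Δ_R(β)) = Δ_R(β)` and `Ξ_R(Δ_R(β)) = Ξ_R(β)`. -/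
theorem stmt6 (n : ℕ) (R : Finset ℕ) (hR : ValidR n R) (β : ℕ → ℕ)
    (hβ : UpperTuple n β) :
    (∀ x, 1 ≤ x → x ≤ n →
      ((IsCritical R n β x ↔ IsCritical R n (coreT R n β) x) ∧
        (IsCritical R n β x ↔ IsCritical R n (platformT R n β) x) ∧
        (IsCritical R n β x → coreT R n β x = β x ∧ platformT R n β x = β x))) ∧
    (∀ i, 1 ≤ i → i ≤ n → coreT R n (coreT R n β) i = coreT R n β i) ∧
    (∀ i, 1 ≤ i → i ≤ n → platformT R n (coreT R n β) i = platformT R n β i) := by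
  have hβx : ∀ x, 1 ≤ x → x ≤ n → x ≤ β x := fun x h1 h2 => (hβ x h1 h2).1
  have hcritval : ∀ x, IsCritical R n β x →
      coreT R n β x = β x ∧ platformT R n β x = β x := by
    intro x h
    have hkx := coreKey6 R n β hβ x h.1 h.2.1
    have hpx := platDef6 R n β x ⟨h.1, h.2.1⟩
    rw [beOfCrit6 R n h] at hkx hpx
    exact ⟨by omega, hpx⟩
  have hbe : ∀ i, blockEnd R n (coreT R n β) i = blockEnd R n β i := by
    intro i
    unfold blockEnd
    congr 1
    ext x
    constructor
    · rintro ⟨hx, hc⟩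
      exact ⟨hx, (critCoreIff6 R n β hβ x hc.1 hc.2.1).mpr hc⟩
    · rintro ⟨hx, hc⟩
      exact ⟨hx, (critCoreIff6 R n β hβ x hc.1 hc.2.1).mp hc⟩
  refine ⟨fun x hx1 hxn =>
      ⟨critCoreIff6 R n β hβ x hx1 hxn, critPlatIff6 R n β hβ x hx1 hxn,
        fun h => hcritval x h⟩, ?_, ?_⟩
  · intro i hi1 hin
    obtain ⟨hb1, hb2, _⟩ := beSpec6 R n β i hi1 hin
    have hδx := (hcritval _ hb2).1
    have hki := coreKey6 R n β hβ i hi1 hin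
    rw [coreDef6 R n (coreT R n β) i ⟨hi1, hin⟩, hbe i, hδx]
    have := hβx _ hb2.1 hb2.2.1
    rw [coreDef6 R n β i ⟨hi1, hin⟩]
  · intro i hi1 hin
    obtain ⟨hb1, hb2, _⟩ := beSpec6 R n β i hi1 hin
    rw [platDef6 R n (coreT R n β) i ⟨hi1, hin⟩, hbe i, (hcritval _ hb2).1,
      platDef6 R n β i ⟨hi1, hin⟩]
end

section
/- If β is an upper flag (weakly increasing n-tuple with entries in [n] and β_i ≥ i), then the R-critical list of β is a flag R-critical list: for every h ∈ [r], the critical entry β_{q_h} is at most β_k where k is the leftmost critical index of the (h+1)-st carrel. Consequently every upper flag is a gapless core R-tuple. -/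
open Finset

/-- Every upper flag has a flag `R`-critical list; hence it is a gapless core
`R`-tuple (an upper tuple with a flag critical list). -/
theorem stmt7 (n : ℕ) (R : Finset ℕ) (hR : ValidR n R) (β : ℕ → ℕ)
    (hβ : UpperTuple n β) (hflag : ∀ i, 1 ≤ i → i < n → β i ≤ β (i + 1)) :
    FlagCriticalList R n β ∧ (UpperTuple n β ∧ FlagCriticalList R n β) := by
  have mono : ∀ a b, 1 ≤ a → a ≤ b → b ≤ n → β a ≤ β b := by
    intro a b ha hab hbn
    induction b with
    | zero => omega
    | succ k ih =>
      rcases Nat.lt_or_ge a (k + 1) with h | h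
      · exact le_trans (ih (by omega) (by omega)) (hflag k (by omega) (by omega))
      · have : a = k + 1 := by omega
        simp [this]
  have key : FlagCriticalList R n β := by
    intro q hq
    obtain ⟨hq1, hqn⟩ := hR q hq
    unfold blockEnd
    have hcritn : IsCritical R n β n := by
      refine ⟨by omega, le_rfl, fun j hj1 hj2 => ?_⟩
      have hce : carrelEnd R n n ≤ n := Nat.sInf_le ⟨le_rfl, Or.inr rfl⟩
      omega
    have hne : {x | q + 1 ≤ x ∧ IsCritical R n β x}.Nonempty :=
      ⟨n, by omega, hcritn⟩
    have hmem := Nat.sInf_mem hne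
    have hle : sInf {x | q + 1 ≤ x ∧ IsCritical R n β x} ≤ n := Nat.sInf_le ⟨by omega, hcritn⟩
    obtain ⟨hge, _, hbn, _⟩ := hmem
    exact mono q (sInf {x | q + 1 ≤ x ∧ IsCritical R n β x}) hq1 (by omega) hle
  exact ⟨key, hβ, key⟩
end

section
/- Let γ be an R-increasing upper tuple. Then γ is a gapless R-tuple (its critical list is a flag critical list) if and only if for every h ∈ [r] with γ_{q_h} > γ_{q_h + 1}, setting s := γ_{q_h} - γ_{q_h+1} + 1, one has s ≤ q_{h+1} - q_h and the first s entries of the (h+1)-st carrel are γ_{q_h} - s + 1, γ_{q_h} - s + 2, ..., γ_{q_h}. -/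
open Finset

private lemma key8 (n : ℕ) (R : Finset ℕ) (hR : ValidR n R) (γ : ℕ → ℕ)
    (hγ : UpperTuple n γ) (hinc : RIncreasing n R γ) (q : ℕ) (hq : q ∈ R) :
    γ q ≤ γ (blockEnd R n γ (q + 1)) ↔
      (γ (q + 1) < γ q →
        γ q - γ (q + 1) + 1 ≤ carrelEnd R n (q + 1) - q ∧
        ∀ t, 1 ≤ t → t ≤ γ q - γ (q + 1) + 1 → γ (q + t) = γ (q + 1) + (t - 1)) := by
  obtain ⟨hq1, hqn⟩ := hR q hq
  set Q := carrelEnd R n (q + 1) with hQdef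
  have hnmem : n ∈ {p | q + 1 ≤ p ∧ (p ∈ R ∨ p = n)} := ⟨by omega, Or.inr rfl⟩
  have hQmem : Q ∈ {p | q + 1 ≤ p ∧ (p ∈ R ∨ p = n)} := Nat.sInf_mem ⟨n, hnmem⟩
  have hQ1 : q + 1 ≤ Q := hQmem.1
  have hQn : Q ≤ n := by
    rcases hQmem.2 with h | h
    · exact (hR Q h).2.le
    · omega
  have hQmin : ∀ x ∈ R, q + 1 ≤ x → Q ≤ x := fun x hx h1 => Nat.sInf_le ⟨h1, Or.inl hx⟩
  have hstep : ∀ x, q + 1 ≤ x → x < Q → γ x < γ (x + 1) := by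
    intro x h1 h2
    refine hinc x (by omega) (by omega) ?_
    intro hxR
    exact absurd (hQmin x hxR h1) (by omega)
  have hmono : ∀ x y, q + 1 ≤ x → x ≤ y → y ≤ Q → γ x + (y - x) ≤ γ y := by
    intro x y h1
    induction y with
    | zero => intro h2 h3; exact absurd (h1.trans h2) (by omega)
    | succ m ih =>
      intro h2 h3
      rcases Nat.lt_or_ge x (m + 1) with h | h
      · have h4 := ih (by omega) (by omega)
        have h5 := hstep m (by omega) (by omega)
        omega
      · have hx : x = m + 1 := by omega
        subst hx; simp
  have hcarrel : ∀ x, q + 1 ≤ x → x ≤ Q → carrelEnd R n x = Q := by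
    intro x h1 h2
    have hmem : Q ∈ {p | x ≤ p ∧ (p ∈ R ∨ p = n)} := ⟨h2, hQmem.2⟩
    have hle : carrelEnd R n x ≤ Q := Nat.sInf_le hmem
    have hmem2 : carrelEnd R n x ∈ {p | x ≤ p ∧ (p ∈ R ∨ p = n)} :=
      Nat.sInf_mem ⟨Q, hmem⟩
    have hge : Q ≤ carrelEnd R n x :=
      Nat.sInf_le (show carrelEnd R n x ∈ {p | q + 1 ≤ p ∧ (p ∈ R ∨ p = n)} from
        ⟨h1.trans hmem2.1, hmem2.2⟩)
    exact le_antisymm hle hge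
  have hQcrit : IsCritical R n γ Q := by
    refine ⟨by omega, hQn, ?_⟩
    intro j hj1 hj2
    rw [hcarrel Q hQ1 le_rfl] at hj2
    omega
  have hcrit_iff : ∀ x, q + 1 ≤ x → x < Q →
      (IsCritical R n γ x ↔ γ x + 2 ≤ γ (x + 1)) := by
    intro x h1 h2
    constructor
    · rintro ⟨-, -, hc⟩
      have := hc (x + 1) (by omega) (by rw [hcarrel x h1 (by omega)]; omega)
      omega
    · intro h
      refine ⟨by omega, by omega, ?_⟩
      intro j hj1 hj2
      rw [hcarrel x h1 (by omega)] at hj2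
      have := hmono (x + 1) j (by omega) hj1 hj2
      omega
  set b := blockEnd R n γ (q + 1) with hbdef
  have hbmem : b ∈ {x | q + 1 ≤ x ∧ IsCritical R n γ x} := Nat.sInf_mem ⟨Q, hQ1, hQcrit⟩
  have hb1 : q + 1 ≤ b := hbmem.1
  have hbQ : b ≤ Q := Nat.sInf_le ⟨hQ1, hQcrit⟩
  have hnotcrit : ∀ x, q + 1 ≤ x → x < b → ¬ IsCritical R n γ x := by
    intro x h1 h2 hc
    have : b ≤ x :=
      Nat.sInf_le (show x ∈ {x | q + 1 ≤ x ∧ IsCritical R n γ x} from ⟨h1, hc⟩)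
    omega
  have hrun : ∀ x, q + 1 ≤ x → x ≤ b → γ x = γ (q + 1) + (x - (q + 1)) := by
    intro x
    induction x with
    | zero => intro h1 h2; exact absurd h1 (by omega)
    | succ m ih =>
      intro h1 h2
      rcases Nat.lt_or_ge (q + 1) (m + 1) with h | h
      · have h4 := ih (by omega) (by omega)
        have h5 := hstep m (by omega) (by omega)
        have h6 : ¬ γ m + 2 ≤ γ (m + 1) := by
          intro hcon
          exact hnotcrit m (by omega) (by omega)
            ((hcrit_iff m (by omega) (by omega)).2 hcon)
        omega
      · have hx : q + 1 = m + 1 := by omega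
        rw [← hx]; simp
  constructor
  · intro H hlt
    have hgb := hrun b hb1 le_rfl
    have hbs : q + (γ q - γ (q + 1) + 1) ≤ b := by omega
    constructor
    · omega
    · intro t ht1 ht2
      have := hrun (q + t) (by omega) (by omega)
      omega
  · intro H
    rcases Nat.lt_or_ge (γ (q + 1)) (γ q) with hlt | hge
    · obtain ⟨hs, hrun'⟩ := H hlt
      have hnc : ∀ x, q + 1 ≤ x → x < q + (γ q - γ (q + 1) + 1) →
          ¬ IsCritical R n γ x := by
        intro x h1 h2 hc
        obtain ⟨t, rfl⟩ : ∃ t, x = q + t := ⟨x - q, by omega⟩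
        have e1 := hrun' t (by omega) (by omega)
        have e2 := hrun' (t + 1) (by omega) (by omega)
        have := (hcrit_iff (q + t) h1 (by omega)).1 hc
        have ht : q + t + 1 = q + (t + 1) := by omega
        rw [ht] at this
        omega
      have hbge : q + (γ q - γ (q + 1) + 1) ≤ b := by
        by_contra hcon
        exact hnc b hb1 (by omega) hbmem.2
      have e3 := hrun' (γ q - γ (q + 1) + 1) (by omega) le_rfl
      have e4 := hmono (q + (γ q - γ (q + 1) + 1)) b (by omega) hbge hbQ
      omega
    · have := hmono (q + 1) b le_rfl hb1 hbQ
      omega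

/-- An `R`-increasing upper tuple `γ` is gapless iff for each divider `q ∈ R`
with `γ q > γ (q+1)`, putting `s := γ q - γ (q+1) + 1`, we have `s ≤ p_{h+1}`
and the first `s` entries of the next carrel are `γ q - s + 1, ..., γ q`. -/
theorem stmt8 (n : ℕ) (R : Finset ℕ) (hR : ValidR n R) (γ : ℕ → ℕ)
    (hγ : UpperTuple n γ) (hinc : RIncreasing n R γ) :
    FlagCriticalList R n γ ↔
      ∀ q ∈ R, γ (q + 1) < γ q →
        γ q - γ (q + 1) + 1 ≤ carrelEnd R n (q + 1) - q ∧
        ∀ t, 1 ≤ t → t ≤ γ q - γ (q + 1) + 1 → γ (q + t) = γ (q + 1) + (t - 1) := by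
  constructor
  · intro H q hq
    exact (key8 n R hR γ hγ hinc q hq).1 (H q hq)
  · intro H q hq
    exact (key8 n R hR γ hγ hinc q hq).2 (H q hq)
end

section
/- Let λ be a partition with n parts and β an upper n-tuple. The map sending each semistandard tableau T ∈ S_λ(β) to the n-tuple of lattice paths (Λ_1,...,Λ_n), where Λ_m is the path from source (n-m, m) to sink (λ_m + n - m, β_m) whose successive easterly steps have depths equal to the entries of row m of T (followed by southerly steps down to depth β_m), is a bijection from S_λ(β) onto the set of n-tuples of pairwise non-intersecting lattice paths with these sources and sinks. -/
open Finset

lemma extDepth_zero (b d u : ℕ) (t : ℕ → ℕ) : extDepth b d u t 0 = b := by simp [extDepth]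

lemma extDepth_of_mem (b d u : ℕ) (t : ℕ → ℕ) {j : ℕ} (h1 : 1 ≤ j) (h2 : j ≤ u) :
    extDepth b d u t j = t j := by
  have : j ≠ 0 := by omega
  simp [extDepth, this, h2]

lemma extDepth_of_gt (b d u : ℕ) (t : ℕ → ℕ) {j : ℕ} (h : u < j) :
    extDepth b d u t j = d := by
  have h0 : j ≠ 0 := by omega
  have h1 : ¬ j ≤ u := by omega
  simp [extDepth, h0, h1]

lemma extDepth_mono {b d u : ℕ} {t : ℕ → ℕ} (h : ValidPath b d u t) :
    Monotone (extDepth b d u t) := by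
  apply monotone_nat_of_le_succ
  intro j
  rcases le_or_gt j u with hj | hj
  · exact h j hj
  · rw [extDepth_of_gt b d u t hj, extDepth_of_gt b d u t (by omega : u < j + 1)]

/-- The recording map (row `m` of `T` gives the depths of the easterly steps of the
`m`-th path, from source `(n-m, m)` to sink `(λ m + n - m, β m)`) is a bijection from
`S_λ(β)` onto the set of pairwise non-intersecting `n`-tuples of lattice paths with
these sources and sinks.  With normalized encodings the recording map is `id`. -/
theorem stmt9 (n : ℕ) (hn : 1 ≤ n) (lam β : ℕ → ℕ) (hlam : IsPartition n lam)
    (hβ : ∀ i, 1 ≤ i → i ≤ n → i ≤ β i ∧ β i ≤ n) :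
    Set.BijOn (id : (ℕ → ℕ → ℕ) → (ℕ → ℕ → ℕ))
      {T | IsSSYT n lam T ∧ RowBound n lam β T ∧ NormalizedTab n lam T}
      {L | (∀ m, 1 ≤ m → m ≤ n → ValidPath m (β m) (lam m) (L m)) ∧
        NormalizedTab n lam L ∧
        ∀ m m', 1 ≤ m → m ≤ n → 1 ≤ m' → m' ≤ n → m ≠ m' →
          ¬∃ p : ℕ × ℕ, OnPath (n - m) m (β m) (lam m) (L m) p ∧
            OnPath (n - m') m' (β m') (lam m') (L m') p} := by
  classical
  -- monotonicity of the partition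
  have lam_mono : ∀ a b, 1 ≤ a → a ≤ b → b ≤ n → lam b ≤ lam a := by
    intro a b ha hab hbn
    induction b with
    | zero => omega
    | succ k ih =>
      rcases Nat.lt_or_ge a (k + 1) with h | h
      · have h1 : lam (k + 1) ≤ lam k := hlam k (by omega) (by omega)
        have h2 := ih (by omega) (by omega)
        omega
      · have : a = k + 1 := by omega
        subst this; exact le_rfl
  constructor
  · -- MapsTo
    intro T hT
    simp only [Set.mem_setOf_eq, id_eq]
    obtain ⟨hssyt, hrow, hnorm⟩ := hT
    obtain ⟨hent, hrowinc, hcol⟩ := hssyt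
    -- column chain
    have chain : ∀ i', i' ≤ n → ∀ i j, 1 ≤ i → i ≤ i' → 1 ≤ j → j ≤ lam i' →
        T i j + (i' - i) ≤ T i' j := by
      intro i'
      induction i' with
      | zero => intro _ i j h1 h2 _ _; omega
      | succ k ih =>
        intro hkn i j h1 h2 hj hjl
        rcases Nat.lt_or_ge i (k + 1) with h | h
        · have hik : i ≤ k := by omega
          have h1k : 1 ≤ k := le_trans h1 hik
          have hlk : lam (k + 1) ≤ lam k := hlam k h1k (by omega)
          have hc : T k j < T (k + 1) j := hcol k j h1k hkn hj hjl
          have := ih (by omega) i j h1 hik hj (by omega)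
          omega
        · have : i = k + 1 := by omega
          subst this; omega
    -- row monotone (multi-step)
    have rowmono : ∀ i a b, 1 ≤ i → i ≤ n → 1 ≤ a → a ≤ b → b ≤ lam i →
        T i a ≤ T i b := by
      intro i a b hi hin ha hab hbl
      induction b with
      | zero => omega
      | succ k ih =>
        rcases Nat.lt_or_ge a (k + 1) with h | h
        · have h1 : T i k ≤ T i (k + 1) := hrowinc i k hi hin (by omega) hbl
          have h2 := ih (by omega) (by omega)
          omega
        · have : a = k + 1 := by omega
          subst this; exact le_rfl
    refine ⟨?_, hnorm, ?_⟩
    · -- valid paths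
      intro m hm1 hmn j hj
      rcases Nat.eq_zero_or_pos j with rfl | hj1
      · rcases Nat.eq_zero_or_pos (lam m) with h0 | h0
        · rw [extDepth_zero, extDepth_of_gt _ _ _ _ (by omega : lam m < 1)]
          exact (hβ m hm1 hmn).1
        · rw [extDepth_zero, extDepth_of_mem _ _ _ _ le_rfl h0]
          have hl1 : 1 ≤ lam 1 := le_trans h0 (lam_mono 1 m le_rfl hm1 hmn)
          have h11 : 1 ≤ T 1 1 := (hent 1 1 le_rfl hn le_rfl hl1).1
          have := chain m hmn 1 1 le_rfl hm1 le_rfl h0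
          omega
      · rcases Nat.lt_or_ge j (lam m) with h | h
        · rw [extDepth_of_mem _ _ _ _ hj1 hj, extDepth_of_mem _ _ _ _ (by omega) (by omega)]
          exact hrowinc m j hm1 hmn hj1 (by omega)
        · have hje : j = lam m := by omega
          rw [extDepth_of_mem _ _ _ _ hj1 hj, extDepth_of_gt _ _ _ _ (by omega : lam m < j + 1)]
          exact hrow m j hm1 hmn hj1 (by omega)
    · -- non-intersecting
      have key : ∀ m m', 1 ≤ m → m' ≤ n → m < m' →
          ¬∃ p : ℕ × ℕ, OnPath (n - m) m (β m) (lam m) (T m) p ∧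
            OnPath (n - m') m' (β m') (lam m') (T m') p := by
        rintro m m' hm1 hm'n hmm' ⟨p, ⟨j, hju, hx, hp1, hp2⟩, ⟨j', hj'u, hx', hq1, hq2⟩⟩
        have hxeq : n - m + j = n - m' + j' := by rw [← hx, ← hx']
        have hj' : j' = j + (m' - m) := by omega
        have hj'1 : 1 ≤ j' := by omega
        have hjm : j + 1 ≤ j' := by omega
        have hjlm' : j + 1 ≤ lam m' := by omega
        have hlml : lam m' ≤ lam m := lam_mono m m' hm1 (by omega) hm'n
        rw [extDepth_of_mem _ _ _ _ (by omega) (by omega)] at hp2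
        rw [extDepth_of_mem _ _ _ _ hj'1 hj'u] at hq1
        have h1 : T m (j + 1) + (m' - m) ≤ T m' (j + 1) :=
          chain m' hm'n m (j + 1) hm1 (by omega) (by omega) hjlm'
        have h2 : T m' (j + 1) ≤ T m' j' := rowmono m' (j + 1) j' (by omega) hm'n (by omega) hjm hj'u
        omega
      intro m m' hm1 hmn hm'1 hm'n hne
      rcases Nat.lt_or_ge m m' with h | h
      · exact key m m' hm1 hm'n h
      · rintro ⟨p, hp, hq⟩
        exact key m' m hm'1 hmn (by omega) ⟨p, hq, hp⟩
  constructor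
  · exact Function.injective_id.injOn
  · -- SurjOn
    intro L hL
    obtain ⟨hvp, hnorm, hnon⟩ := hL
    refine ⟨L, ?_, rfl⟩
    have hb : ∀ m j, 1 ≤ m → m ≤ n → 1 ≤ j → j ≤ lam m → m ≤ L m j ∧ L m j ≤ β m := by
      intro m j hm1 hmn hj1 hjl
      have hmono := extDepth_mono (hvp m hm1 hmn)
      have e0 := extDepth_zero m (β m) (lam m) (L m)
      have ej := extDepth_of_mem m (β m) (lam m) (L m) hj1 hjl
      have etop := extDepth_of_gt m (β m) (lam m) (L m) (by omega : lam m < lam m + 1)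
      constructor
      · have := hmono (Nat.zero_le j); rw [e0, ej] at this; exact this
      · have := hmono (by omega : j ≤ lam m + 1); rw [ej, etop] at this; exact this
    refine ⟨⟨?_, ?_, ?_⟩, ?_, hnorm⟩
    · intro i j hi hin hj hjl
      have h := hb i j hi hin hj hjl
      have hβi := (hβ i hi hin).2
      omega
    · intro i j hi hin hj hjl
      have hmono := extDepth_mono (hvp i hi hin)
      have h1 := extDepth_of_mem i (β i) (lam i) (L i) hj (by omega)
      have h2 := extDepth_of_mem i (β i) (lam i) (L i) (by omega) hjl
      have := hmono (by omega : j ≤ j + 1)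
      rw [h1, h2] at this; exact this
    · -- column strict via non-intersection
      intro i j hi hin hj hjl
      by_contra hcon
      push_neg at hcon
      have hlml : lam (i + 1) ≤ lam i := hlam i hi (by omega)
      set e : ℕ → ℕ → ℕ := fun m k => extDepth m (β m) (lam m) (L m) k with he
      have hex : ∃ k, e (i + 1) k ≤ e i k := by
        refine ⟨j, ?_⟩
        rw [he]
        simp only
        rw [extDepth_of_mem _ _ _ _ hj hjl, extDepth_of_mem _ _ _ _ hj (by omega)]
        exact hcon
      set k := Nat.find hex with hk
      have hkspec : e (i + 1) k ≤ e i k := Nat.find_spec hex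
      have hkj : k ≤ j := Nat.find_min' hex (by
        rw [he]; simp only
        rw [extDepth_of_mem _ _ _ _ hj hjl, extDepth_of_mem _ _ _ _ hj (by omega)]
        exact hcon)
      have hk0 : k ≠ 0 := by
        intro h0
        have := hkspec
        rw [h0] at this
        rw [he] at this
        simp only at this
        rw [extDepth_zero, extDepth_zero] at this
        omega
      have hkm : ¬ e (i + 1) (k - 1) ≤ e i (k - 1) := Nat.find_min hex (by omega)
      push_neg at hkm
      have hmono1 := extDepth_mono (hvp i hi (by omega))
      have hmono2 := extDepth_mono (hvp (i + 1) (by omega) (by omega))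
      refine hnon i (i + 1) hi (by omega) (by omega) (by omega) (by omega)
        ⟨(n - (i + 1) + k, max (e i (k - 1)) (e (i + 1) k)), ⟨k - 1, ?_, ?_, ?_, ?_⟩,
          ⟨k, ?_, rfl, le_max_right _ _, ?_⟩⟩
      · omega
      · simp only; omega
      · exact le_max_left _ _
      · simp only
        have hstep : k - 1 + 1 = k := by omega
        rw [hstep]
        have h1 : e i (k - 1) ≤ e i k := hmono1 (by omega)
        exact max_le h1 hkspec
      · omega
      · have h1 : e i (k - 1) < e (i + 1) (k - 1) := hkm
        have h2 : e (i + 1) (k - 1) ≤ e (i + 1) (k + 1) := hmono2 (by omega)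
        have h3 : e (i + 1) k ≤ e (i + 1) (k + 1) := hmono2 (by omega)
        show max (e i (k - 1)) (e (i + 1) k) ≤ e (i + 1) (k + 1)
        exact max_le (by omega) h3
    · intro i j hi hin hj hjl
      exact (hb i j hi hin hj hjl).2
end

section
/- (Stanley's nonpermutability remark) Let λ be a partition with n parts and β a weakly increasing upper n-tuple (β_1 ≤ ... ≤ β_n, β_i ≥ i). For every permutation π of [n] with π ≠ identity, there is no n-tuple (Λ_1,...,Λ_n) of pairwise non-intersecting lattice paths such that Λ_m has source (n-m, m) and sink (λ_{π(m)} + n - π(m), β_{π(m)}) for all m. -/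
open Finset

lemma myChainLe {n : ℕ} {f : ℕ → ℕ} (h : ∀ i, 1 ≤ i → i < n → f i ≤ f (i+1)) :
    ∀ i j, 1 ≤ i → i ≤ j → j ≤ n → f i ≤ f j := by
  intro i j hi hij hjn
  induction j with
  | zero => omega
  | succ k ih =>
    rcases Nat.lt_or_ge i (k+1) with hlt | hge
    · exact (ih (by omega) (by omega)).trans (h k (by omega) (by omega))
    · have : i = k + 1 := by omega
      rw [this]

lemma myChainGe {n : ℕ} {f : ℕ → ℕ} (h : ∀ i, 1 ≤ i → i < n → f (i+1) ≤ f i) :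
    ∀ i j, 1 ≤ i → i ≤ j → j ≤ n → f j ≤ f i := by
  intro i j hi hij hjn
  induction j with
  | zero => omega
  | succ k ih =>
    rcases Nat.lt_or_ge i (k+1) with hlt | hge
    · exact (h k (by omega) (by omega)).trans (ih (by omega) (by omega))
    · have : i = k + 1 := by omega
      rw [this]

lemma extDepth_eq_d (b d u : ℕ) (t : ℕ → ℕ) {j : ℕ} (hj : u < j) :
    extDepth b d u t j = d := by
  unfold extDepth
  rw [if_neg (by omega), if_neg (by omega)]

lemma extDepth_le_d {b d u : ℕ} {t : ℕ → ℕ} (h : ValidPath b d u t) (j : ℕ) :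
    extDepth b d u t j ≤ d := by
  by_cases hj : u < j
  · rw [extDepth_eq_d b d u t hj]
  · calc extDepth b d u t j ≤ extDepth b d u t (u+1) := extDepth_mono h (by omega)
      _ = d := extDepth_eq_d b d u t (by omega)

lemma b_le_extDepth {b d u : ℕ} {t : ℕ → ℕ} (h : ValidPath b d u t) (j : ℕ) :
    b ≤ extDepth b d u t j := by
  conv_lhs => rw [← extDepth_zero b d u t]
  exact extDepth_mono h (Nat.zero_le j)

lemma exists_flip (P : ℕ → Prop) : ∀ U, P 0 → ¬ P U → ∃ j, j < U ∧ P j ∧ ¬ P (j+1) := by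
  intro U
  induction U with
  | zero => intro h0 h; exact absurd h0 h
  | succ k ih =>
    intro h0 h
    by_cases hk : P k
    · exact ⟨k, Nat.lt_succ_self k, hk, h⟩
    · obtain ⟨j, hj, hP, hnP⟩ := ih h0 hk
      exact ⟨j, hj.trans (Nat.lt_succ_self k), hP, hnP⟩

/-- Stanley's remark: if `β` is a weakly increasing upper tuple (a flag), then the
terminal pair `(λ, β)` is nonpermutable. -/
theorem stmt10 (n : ℕ) (hn : 1 ≤ n) (lam β : ℕ → ℕ) (hlam : IsPartition n lam)
    (hβ : UpperTuple n β) (hflag : ∀ i, 1 ≤ i → i < n → β i ≤ β (i + 1)) :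
    Nonpermutable n lam β := by
  intro π hπ hex
  rintro ⟨u, L, h1, h2⟩
  classical
  -- least non-fixed point m
  obtain ⟨m, ⟨hm1, hmn, hmne⟩, hmin⟩ :
      ∃ m, (1 ≤ m ∧ m ≤ n ∧ π m ≠ m) ∧ ∀ k, k < m → 1 ≤ k → π k = k := by
    have hex' : ∃ m, 1 ≤ m ∧ m ≤ n ∧ π m ≠ m := hex
    refine ⟨Nat.find hex', Nat.find_spec hex', ?_⟩
    intro k hk hk1
    by_contra hne
    have hkn : k ≤ n := le_trans (le_of_lt (lt_of_lt_of_le hk (Nat.find_spec hex').2.1)) le_rfl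
    exact Nat.find_min hex' hk ⟨hk1, hkn, hne⟩
  have hmem : m ∈ Set.Icc 1 n := Set.mem_Icc.2 ⟨hm1, hmn⟩
  obtain ⟨hπm1, hπmn⟩ := Set.mem_Icc.1 (hπ.mapsTo hmem)
  -- π m > m
  have hπmgt : m < π m := by
    rcases Nat.lt_or_ge m (π m) with h | h
    · exact h
    · exfalso
      have hlt : π m < m := by omega
      have hfix : π (π m) = π m := hmin (π m) hlt hπm1
      exact hmne (hπ.injOn (hπ.mapsTo hmem) hmem (by rw [hfix]))
  -- preimage m' of m
  obtain ⟨m', hm'mem, hπm'⟩ := hπ.surjOn hmem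
  obtain ⟨hm'1, hm'n⟩ := Set.mem_Icc.1 hm'mem
  have hmm' : m < m' := by
    rcases Nat.lt_trichotomy m m' with h | h | h
    · exact h
    · exfalso; subst h; exact hmne hπm'
    · exfalso
      have : π m' = m' := hmin m' h hm'1
      omega
  have hlt : π m' < π m := by rw [hπm']; exact hπmgt
  have hπm'1 : 1 ≤ π m' := by omega
  -- path data
  obtain ⟨heqm, hvm⟩ := h1 m hm1 hmn
  obtain ⟨heqm', hvm'⟩ := h1 m' hm'1 hm'n
  -- monotonicity consequences
  have hlamle : lam (π m) ≤ lam (π m') :=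
    myChainGe hlam (π m') (π m) hπm'1 (le_of_lt hlt) hπmn
  have hβle : β (π m') ≤ β (π m) :=
    myChainLe hflag (π m') (π m) hπm'1 (le_of_lt hlt) hπmn
  have hX : lam (π m) + (n - π m) < lam (π m') + (n - π m') := by omega
  have hcol : n - m = (n - m') + (m' - m) := by omega
  have hcU : (m' - m) + u m < u m' := by omega
  set c := m' - m with hcdef
  set e := extDepth m (β (π m)) (u m) (L m) with hedef
  set e' := extDepth m' (β (π m')) (u m') (L m') with he'def
  have hem : Monotone e := extDepth_mono hvm
  have he'm : Monotone e' := extDepth_mono hvm'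
  have he'ge : ∀ j, m' ≤ e' j := fun j => b_le_extDepth hvm' j
  have he'le : ∀ j, e' j ≤ β (π m') := fun j => extDepth_le_d hvm' j
  have hne : m ≠ m' := by omega
  apply h2 m m' hm1 hmn hm'1 hm'n hne
  by_cases hP0 : e 1 < e' c
  · -- P 0 holds; since ¬ P (u m), find a flip
    have hPU : ¬ e (u m + 1) < e' (c + u m) := by
      have ha : e (u m + 1) = β (π m) := extDepth_eq_d _ _ _ _ (by omega)
      have hb : e' (c + u m) ≤ β (π m') := he'le _
      omega
    obtain ⟨j, hjU, hPj, hPj1⟩ :=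
      exists_flip (fun j => e (j+1) < e' (c + j)) (u m) hP0 hPU
    have hPj1' : e' (c + j + 1) ≤ e (j + 1 + 1) := not_lt.1 hPj1
    refine ⟨(n - m + (j + 1), e' (c + j + 1)), ⟨j + 1, by omega, rfl, ?_, hPj1'⟩,
      ⟨c + j + 1, by omega, ?_, le_refl _, he'm (Nat.le_succ (c + j + 1))⟩⟩
    · exact le_trans (le_of_lt hPj) (he'm (Nat.le_succ (c + j)))
    · show n - m + (j + 1) = n - m' + (c + j + 1)
      omega
  · -- ¬ P 0: intersection at the first column of the short path
    have hP0' : e' c ≤ e 1 := not_lt.1 hP0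
    refine ⟨(n - m, e' c), ⟨0, Nat.zero_le _, by simp, ?_, hP0'⟩,
      ⟨c, by omega, ?_, le_refl _, he'm (Nat.le_succ c)⟩⟩
    · show e 0 ≤ e' c
      have ha : e 0 = m := extDepth_zero _ _ _ _
      have hb := he'ge c
      omega
    · show n - m = n - m' + c
      omega
end

section
/- If the partition λ has distinct nonzero parts restricted to its positive rows (i.e., λ_1 > λ_2 > ... whenever parts are positive), then the row ending entries of the unique maximal tableau of S_λ(β) equal the entries of β on the nonempty rows; consequently the map β ↦ S_λ(β) is injective on upper n-tuples β restricted to the coordinates of nonempty rows. -/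
open Finset

/-- Witness tableau: the minimal tableau with the last entry of row `i` boosted to `β i`. -/
lemma witness_tab (n : ℕ) (lam β : ℕ → ℕ) (hlam : IsPartition n lam)
    (hdist : ∀ i, 1 ≤ i → i < n → 0 < lam (i + 1) → lam (i + 1) < lam i)
    (hβ : ∀ i, 1 ≤ i → i ≤ n → i ≤ β i ∧ β i ≤ n)
    (i : ℕ) (hi1 : 1 ≤ i) (hin : i ≤ n) (hpos : 0 < lam i) :
    IsSSYT n lam (fun a b => if a = i ∧ b = lam i then β i else a) ∧
    RowBound n lam β (fun a b => if a = i ∧ b = lam i then β i else a) := by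
  obtain ⟨hiβ, hβn⟩ := hβ i hi1 hin
  refine ⟨⟨?_, ?_, ?_⟩, ?_⟩
  · intro a b ha han hb hbl
    dsimp only
    split_ifs with h
    · exact ⟨by omega, hβn⟩
    · exact ⟨ha, han⟩
  · intro a b ha han hb hbl
    dsimp only
    split_ifs with h1 h2 h2
    · omega
    · obtain ⟨rfl, hb'⟩ := h1; omega
    · obtain ⟨rfl, hb'⟩ := h2; omega
    · exact le_rfl
  · intro a b ha han hb hbl
    dsimp only
    split_ifs with h1 h2 h2
    · omega
    · obtain ⟨rfl, rfl⟩ := h1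
      exfalso
      by_cases hp : 0 < lam (a + 1)
      · have := hdist a ha (by omega) hp; omega
      · omega
    · obtain ⟨rfl, hb'⟩ := h2; omega
    · omega
  · intro a b ha han hb hbl
    dsimp only
    split_ifs with h
    · obtain ⟨rfl, hb'⟩ := h; exact le_rfl
    · exact (hβ a ha han).1

/-- If `λ` has distinct positive parts, the row ending entries of the maximal tableau
of `S_λ(β)` equal `β` on nonempty rows; hence `β ↦ S_λ(β)` is injective on those
coordinates. -/
theorem stmt15 (n : ℕ) (hn : 1 ≤ n) (lam β β' : ℕ → ℕ) (hlam : IsPartition n lam)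
    (hdist : ∀ i, 1 ≤ i → i < n → 0 < lam (i + 1) → lam (i + 1) < lam i)
    (hβ : ∀ i, 1 ≤ i → i ≤ n → i ≤ β i ∧ β i ≤ n)
    (hβ' : ∀ i, 1 ≤ i → i ≤ n → i ≤ β' i ∧ β' i ≤ n) :
    (∀ M, (IsSSYT n lam M ∧ RowBound n lam β M ∧
        ∀ T, IsSSYT n lam T ∧ RowBound n lam β T →
          ∀ i j, 1 ≤ i → i ≤ n → 1 ≤ j → j ≤ lam i → T i j ≤ M i j) →
      ∀ i, 1 ≤ i → i ≤ n → 0 < lam i → M i (lam i) = β i) ∧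
    (({T | IsSSYT n lam T ∧ RowBound n lam β T} =
        {T | IsSSYT n lam T ∧ RowBound n lam β' T}) →
      ∀ i, 1 ≤ i → i ≤ n → 0 < lam i → β i = β' i) := by
  constructor
  · rintro M ⟨hM, hMb, hmax⟩ i hi1 hin hpos
    obtain ⟨hT, hTb⟩ := witness_tab n lam β hlam hdist hβ i hi1 hin hpos
    have h1 := hmax _ ⟨hT, hTb⟩ i (lam i) hi1 hin hpos le_rfl
    have h2 := hMb i (lam i) hi1 hin hpos le_rfl
    simp at h1
    omega
  · intro hset i hi1 hin hpos
    obtain ⟨hT, hTb⟩ := witness_tab n lam β hlam hdist hβ i hi1 hin hpos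
    obtain ⟨hT', hTb'⟩ := witness_tab n lam β' hlam hdist hβ' i hi1 hin hpos
    have m1 : (fun a b => if a = i ∧ b = lam i then β i else a) ∈
        {T | IsSSYT n lam T ∧ RowBound n lam β' T} := hset ▸ ⟨hT, hTb⟩
    have m2 : (fun a b => if a = i ∧ b = lam i then β' i else a) ∈
        {T | IsSSYT n lam T ∧ RowBound n lam β T} := hset.symm ▸ ⟨hT', hTb'⟩
    have h1 := m1.2 i (lam i) hi1 hin hpos le_rfl
    have h2 := m2.2 i (lam i) hi1 hin hpos le_rfl
    simp at h1 h2
    omega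
end
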